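/- arXiv:2205.13870 — 5 statements merged into one kernel-verified Lean document; each statement's English description precedes it below -/
import Mathlib

section
/- Let C be an asymmetric configuration with |C| ≥ 3 whose smallest enclosing rectangle R = ABCD has shorter side |AB| = n ≥ 2 and |AD| = m ≥ n, and whose unique lexicographically largest associated string is λ_AB. Let T be the tail of C (which necessarily lies on the far shorter side CD), let u be the unit vector perpendicular to AB pointing from side AB toward side CD, and set C_new = (C \ {T}) ∪ {T + u}. Then the smallest enclosing rectangle of C_new is the (m+1) × n rectangle obtained from R by moving side CD one unit in the direction u, this rectangle is non-square, and the string of C_new read from corner A in the direction of AB is the unique lexicographically largest associated string of C_new; in particular C_new is asymmetric and its leading corner is again A. -/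
/-! Robots occupy distinct points of the integer grid `ℤ²`; a configuration is a
nonempty finite set `C : Finset (ℤ × ℤ)`.  Throughout, the smallest enclosing
rectangle is translated so that its corners are `A = (0,0)`, `B = (n-1,0)`,
`C = (n-1,m-1)`, `D = (0,m-1)`, where `n` is the number of grid points on side
`AB` and `m` the number of grid points on side `AD`. -/

/-- Occupancy scan of a rectangle: `M` successive grid lines, each holding `N`
grid points; `f i j` is the grid point on the `i`-th line at position `j`;
record `true` at occupied and `false` at unoccupied grid points. -/
def scanStr (C : Finset (ℤ × ℤ)) (M N : ℕ) (f : ℕ → ℕ → ℤ × ℤ) : List Bool :=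
  (List.range M).flatMap (fun i => (List.range N).map (fun j => decide (f i j ∈ C)))

/-- `λ_AB`: rows `y = 0, …, m-1`, each scanned with `x` ascending. -/
def lamAB (C : Finset (ℤ × ℤ)) (n m : ℕ) : List Bool :=
  scanStr C m n (fun y x => ((x : ℤ), (y : ℤ)))

/-- `λ_BA`: rows `y = 0, …, m-1`, each scanned with `x` descending. -/
def lamBA (C : Finset (ℤ × ℤ)) (n m : ℕ) : List Bool :=
  scanStr C m n (fun y x => ((n : ℤ) - 1 - x, (y : ℤ)))

/-- `λ_CD`: rows `y = m-1, …, 0`, each scanned with `x` descending. -/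
def lamCD (C : Finset (ℤ × ℤ)) (n m : ℕ) : List Bool :=
  scanStr C m n (fun y x => ((n : ℤ) - 1 - x, (m : ℤ) - 1 - y))

/-- `λ_DC`: rows `y = m-1, …, 0`, each scanned with `x` ascending. -/
def lamDC (C : Finset (ℤ × ℤ)) (n m : ℕ) : List Bool :=
  scanStr C m n (fun y x => ((x : ℤ), (m : ℤ) - 1 - y))

/-- `λ_BC`: columns `x = n-1, …, 0`, each scanned with `y` ascending. -/
def lamBC (C : Finset (ℤ × ℤ)) (n m : ℕ) : List Bool :=
  scanStr C n m (fun x y => ((n : ℤ) - 1 - x, (y : ℤ)))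

/-- `λ_CB`: columns `x = n-1, …, 0`, each scanned with `y` descending. -/
def lamCB (C : Finset (ℤ × ℤ)) (n m : ℕ) : List Bool :=
  scanStr C n m (fun x y => ((n : ℤ) - 1 - x, (m : ℤ) - 1 - y))

/-- `λ_AD`: columns `x = 0, …, n-1`, each scanned with `y` ascending. -/
def lamAD (C : Finset (ℤ × ℤ)) (n m : ℕ) : List Bool :=
  scanStr C n m (fun x y => ((x : ℤ), (y : ℤ)))

/-- `λ_DA`: columns `x = 0, …, n-1`, each scanned with `y` descending. -/
def lamDA (C : Finset (ℤ × ℤ)) (n m : ℕ) : List Bool :=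
  scanStr C n m (fun x y => ((x : ℤ), (m : ℤ) - 1 - y))

/-- Strict lexicographic comparison of binary strings. -/
def lexLt (a b : List Bool) : Prop := List.Lex (· < ·) a b

/-- The smallest enclosing rectangle of `C` is `[0, n-1] × [0, m-1]`
(`n` grid points wide, `m` grid points high). -/
def isSER (C : Finset (ℤ × ℤ)) (n m : ℕ) : Prop :=
  (∀ p ∈ C, 0 ≤ p.1 ∧ p.1 ≤ (n : ℤ) - 1 ∧ 0 ≤ p.2 ∧ p.2 ≤ (m : ℤ) - 1) ∧
  (∃ p ∈ C, p.1 = 0) ∧ (∃ p ∈ C, p.1 = (n : ℤ) - 1) ∧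
  (∃ p ∈ C, p.2 = 0) ∧ (∃ p ∈ C, p.2 = (m : ℤ) - 1)

/-- The order in which grid points are visited by the scan `λ_AB`:
`p` comes strictly before `q`. -/
def scanLt (p q : ℤ × ℤ) : Prop := p.2 < q.2 ∨ (p.2 = q.2 ∧ p.1 < q.1)

/-- `h` is the head of `C`: the robot at the position of the first `1` of `λ_AB`. -/
def isHead (C : Finset (ℤ × ℤ)) (h : ℤ × ℤ) : Prop :=
  h ∈ C ∧ ∀ p ∈ C, p ≠ h → scanLt h p

/-- `t` is the tail of `C`: the robot at the position of the last `1` of `λ_AB`. -/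
def isTail (C : Finset (ℤ × ℤ)) (t : ℤ × ℤ) : Prop :=
  t ∈ C ∧ ∀ p ∈ C, p ≠ t → scanLt p t

/-- The four associated strings of a non-square configuration. -/
def strings4 (C : Finset (ℤ × ℤ)) (n m : ℕ) : List (List Bool) :=
  [lamAB C n m, lamBA C n m, lamCD C n m, lamDC C n m]

/-- The eight associated strings of a configuration whose rectangle is a square. -/
def strings8 (C : Finset (ℤ × ℤ)) (n m : ℕ) : List (List Bool) :=
  [lamAB C n m, lamBA C n m, lamCD C n m, lamDC C n m,
   lamBC C n m, lamCB C n m, lamAD C n m, lamDA C n m]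

/-- The associated strings of `C`: eight of them if the rectangle is a square,
four otherwise. -/
def assocStrings (C : Finset (ℤ × ℤ)) (n m : ℕ) : List (List Bool) :=
  if n = m then strings8 C n m else strings4 C n m

/-- The `i`-th member of the list `L` of associated strings is the unique
lexicographically largest one: every other member (by position) is strictly
smaller. -/
def uniqueMaxAt (L : List (List Bool)) (i : ℕ) : Prop :=
  i < L.length ∧ ∀ j < L.length, j ≠ i → lexLt (L.getD j []) (L.getD i [])

/-- `C` is asymmetric: among its associated strings there is a unique
lexicographically largest one. -/
def asymmetricCfg (C : Finset (ℤ × ℤ)) (n m : ℕ) : Prop :=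
  ∃ i, uniqueMaxAt (assocStrings C n m) i

/-- `λ_AB` is the unique lexicographically largest associated string of `C`
(so `C` is asymmetric with leading corner `A`). -/
def leadingABCfg (C : Finset (ℤ × ℤ)) (n m : ℕ) : Prop :=
  uniqueMaxAt (assocStrings C n m) 0

/-!
Read a configuration as the list of its rows, bottom to top: `λ_AB`, `λ_BA`, `λ_DC` and
`λ_CD` flatten the rows, the reversed rows, the rows in reverse order, and the reversed rows
in reverse order. Moving the tail up replaces the top row `r = x 1 0^z` by the two rows
`x 0^(z+1)` and `e = 0^|x| 1 0^z`; all lower rows stay.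

If `x` contains a robot, then `e < r` and `reverse e < reverse r`, while the old
comparisons give `r ≤ R₀` and `reverse r ≤ R₀` for the bottom row `R₀`; so `λ_DC` and
`λ_CD` already lose on their first row. `λ_BA` loses either on the unchanged rows or, when
these are palindromes, on the new second row: since `reverse r < r`, the first robot of `x`
sits at most `z` steps from the left end.

If `x` holds no robot, then `e = r` and the move just inserts a zero row under the top row.
This cannot make another string win, because `0^k w ≤ w 0^k` for every word `w`.
-/

namespace List

theorem lex_append_iff_of_length_eq {α : Type*} {r : α → α → Prop} {a b u v : List α}
    (h : a.length = b.length) :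
    Lex r (a ++ u) (b ++ v) ↔ Lex r a b ∨ a = b ∧ Lex r u v := by
  induction a generalizing b with
  | nil => cases b <;> simp_all
  | cons x a ih =>
    cases b with
    | nil => simp at h
    | cons y b =>
      simp only [cons_append, cons_lex_cons_iff, length_cons, add_left_inj] at h ⊢
      rw [ih h]
      constructor
      · rintro (hxy | ⟨rfl, hab | ⟨rfl, huv⟩⟩) <;> simp_all
      · rintro ((hxy | ⟨rfl, hab⟩) | ⟨⟨rfl, rfl⟩, huv⟩) <;> simp_all

theorem reverse_map_range {α : Type*} (g : ℕ → α) (M : ℕ) :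
    ((range M).map g).reverse = (range M).map fun i => g (M - 1 - i) := by
  rw [← map_reverse, range_eq_range', reverse_range', map_map]
  simp [Function.comp_def, range_eq_range']

variable {a b u v : List Bool}

theorem append_lt_append_iff_of_length_eq (h : a.length = b.length) :
    a ++ u < b ++ v ↔ a < b ∨ a = b ∧ u < v :=
  lex_append_iff_of_length_eq h

theorem append_lt_append_of_lt (h : a.length = b.length) (hab : a < b) : a ++ u < b ++ v :=
  (append_lt_append_iff_of_length_eq h).2 (Or.inl hab)

theorem le_of_append_lt_append (h : a.length = b.length) (hlt : a ++ u < b ++ v) : a ≤ b := by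
  rcases (append_lt_append_iff_of_length_eq h).1 hlt with hab | ⟨rfl, -⟩
  exacts [hab.le, le_rfl]

theorem append_lt_append_insert (h : a.length = b.length) (hlt : a ++ u < b ++ v)
    (s : List Bool) : a ++ (s ++ u) < b ++ (s ++ v) := by
  rcases (append_lt_append_iff_of_length_eq h).1 hlt with hab | ⟨rfl, huv⟩
  · exact append_lt_append_of_lt h hab
  · exact append_left_lt (append_left_lt huv)

theorem replicate_false_append_lt {p q : ℕ} (hpq : p < q) (l₁ l₂ : List Bool) :
    replicate q false ++ l₁ < replicate p false ++ true :: l₂ := by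
  induction p generalizing q with
  | zero => obtain ⟨q, rfl⟩ := Nat.exists_eq_succ_of_ne_zero hpq.ne'; exact Lex.rel rfl
  | succ p ih =>
    obtain ⟨q, rfl⟩ := Nat.exists_eq_succ_of_ne_zero (by omega : q ≠ 0)
    exact Lex.cons (ih (by omega))

theorem exists_eq_replicate_false_append_true {l : List Bool} (h : true ∈ l) :
    ∃ p w, l = replicate p false ++ true :: w := by
  induction l with
  | nil => simp at h
  | cons b l ih =>
    cases b
    · obtain ⟨p, w, rfl⟩ := ih (by simpa using h)
      exact ⟨p + 1, w, rfl⟩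
    · exact ⟨0, l, rfl⟩

theorem replicate_false_lt_of_true_mem {l : List Bool} (h : true ∈ l) :
    replicate l.length false < l := by
  obtain ⟨p, w, rfl⟩ := exists_eq_replicate_false_append_true h
  have : (replicate p false ++ true :: w).length = (p + 1) + w.length := by
    simp only [length_append, length_replicate, length_cons]
    omega
  rw [this, replicate_add]
  exact replicate_false_append_lt (Nat.lt_succ_self p) _ w

theorem replicate_false_append_le (k : ℕ) (l : List Bool) :
    replicate k false ++ l ≤ l ++ replicate k false := by
  by_cases hl : true ∈ l
  · rcases Nat.eq_zero_or_pos k with rfl | hk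
    · simp
    obtain ⟨p, w, rfl⟩ := exists_eq_replicate_false_append_true hl
    rw [← append_assoc, replicate_append_replicate, append_assoc, cons_append]
    exact (replicate_false_append_lt (by omega) _ _).le
  · have : l = replicate l.length false := eq_replicate_iff.2 ⟨rfl, by simpa using hl⟩
    rw [this, replicate_append_replicate, replicate_append_replicate, Nat.add_comm]

end List

open List

def LeadsAB (L : List (List Bool)) : Prop :=
  (L.map reverse).flatten < L.flatten ∧ (L.map reverse).reverse.flatten < L.flatten ∧
    L.reverse.flatten < L.flatten

theorem insert_zero_block_lt {F R₀ L E w a : List Bool} (hF : F.length = R₀.length)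
    (hw : w.length = a.length) (h : F ++ (w ++ L) < R₀ ++ (a ++ E)) (hL : F = R₀ → L = E)
    (k : ℕ) : F ++ (replicate k false ++ (w ++ L)) < R₀ ++ (a ++ (replicate k false ++ E)) := by
  rcases (append_lt_append_iff_of_length_eq hF).1 h with hlt | ⟨rfl, hwa⟩
  · exact append_lt_append_of_lt hF hlt
  obtain rfl := hL rfl
  have hwa : w < a := by
    rcases (append_lt_append_iff_of_length_eq hw).1 hwa with hwa | ⟨-, hLL⟩
    exacts [hwa, absurd hLL (lt_irrefl _)]
  refine append_left_lt ?_
  have : replicate k false ++ w < a ++ replicate k false :=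
    (append_left_lt hwa).trans_le (replicate_false_append_le k a)
  simpa only [append_assoc] using append_lt_append_of_lt (by simp [hw, Nat.add_comm]) this

theorem LeadsAB.insert_zero_row {P : List (List Bool)} {E : List Bool}
    (hP : ∀ b ∈ P, b.length = E.length) (h : LeadsAB (P ++ [E])) (k : ℕ) :
    LeadsAB (P ++ [replicate k false, E]) := by
  obtain ⟨hBA, hCD, hDC⟩ := h
  have hBA' : (map reverse P).flatten ++ (replicate k false ++ E.reverse) <
      P.flatten ++ (replicate k false ++ E) := by
    simp only [map_append, map_cons, map_nil, flatten_append, flatten_cons, flatten_nil,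
      append_nil] at hBA
    exact append_lt_append_insert (by simp [Function.comp_def]) hBA _
  cases P with
  | nil => simp at hDC
  | cons R₀ M =>
  have hR₀ : R₀.length = E.length := hP R₀ mem_cons_self
  refine ⟨by simpa using hBA', ?_, ?_⟩
  · simp only [map_append, map_cons, map_nil, reverse_append, reverse_cons, reverse_nil,
      flatten_append, flatten_cons, flatten_nil, append_nil, nil_append, reverse_replicate,
      append_assoc] at hCD ⊢
    exact insert_zero_block_lt (by simpa using hR₀.symm)
      (by simp [Function.comp_def]) hCD
      (fun h => by rw [← h, reverse_reverse]) k
  · simp only [reverse_append, reverse_cons, reverse_nil, flatten_append, flatten_cons,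
      flatten_nil, append_nil, nil_append, append_assoc] at hDC ⊢
    exact insert_zero_block_lt hR₀.symm (by simp) hDC Eq.symm k

theorem LeadsAB.replace_top_row {P : List (List Bool)} {r S E : List Bool}
    (hP : ∀ b ∈ P, b.length = r.length) (hE : E.length = r.length) (hEr : E < r)
    (hEr' : E.reverse < r.reverse) (hS : r.reverse < r → S.reverse < S)
    (h : LeadsAB (P ++ [r])) : LeadsAB (P ++ [S, E]) := by
  obtain ⟨hBA, hCD, hDC⟩ := h
  have hBA' : (map reverse P).flatten ++ (S.reverse ++ E.reverse) <
      P.flatten ++ (S ++ E) := by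
    simp only [map_append, map_cons, map_nil, flatten_append, flatten_cons, flatten_nil,
      append_nil] at hBA
    have hlen : (map reverse P).flatten.length = P.flatten.length := by simp [Function.comp_def]
    rcases (append_lt_append_iff_of_length_eq hlen).1 hBA with hlt | ⟨heq, hr⟩
    · exact append_lt_append_of_lt hlen hlt
    · rw [heq]
      exact append_left_lt (append_lt_append_of_lt length_reverse (hS hr))
  cases P with
  | nil => simp at hDC
  | cons R₀ M =>
  have hR₀ : R₀.length = r.length := hP R₀ mem_cons_self
  refine ⟨by simpa using hBA', ?_, ?_⟩
  · simp only [map_append, map_cons, map_nil, reverse_append, reverse_cons, reverse_nil,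
      flatten_append, flatten_cons, flatten_nil, append_nil, nil_append, append_assoc] at hCD ⊢
    have hrR₀ : r.reverse ≤ R₀ := le_of_append_lt_append (by simp [hR₀]) hCD
    exact append_lt_append_of_lt (by simp [hE, hR₀]) (hEr'.trans_le hrR₀)
  · simp only [reverse_append, reverse_cons, reverse_nil, flatten_append, flatten_cons,
      flatten_nil, append_nil, nil_append, append_assoc] at hDC ⊢
    have hrR₀ : r ≤ R₀ := le_of_append_lt_append hR₀.symm hDC
    exact append_lt_append_of_lt (by simp [hE, hR₀]) (hEr.trans_le hrR₀)

theorem LeadsAB.tailUp {P : List (List Bool)} (x : List Bool) (z : ℕ)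
    (hP : ∀ b ∈ P, b.length = x.length + (z + 1))
    (h : LeadsAB (P ++ [x ++ true :: replicate z false])) :
    LeadsAB (P ++ [x ++ replicate (z + 1) false,
      replicate x.length false ++ true :: replicate z false]) := by
  by_cases hx : true ∈ x
  · refine h.replace_top_row (by simpa using hP) (by simp)
      (append_lt_append_of_lt (by simp) (replicate_false_lt_of_true_mem hx)) ?_ ?_
    · simp only [reverse_append, reverse_cons, reverse_replicate, append_assoc, singleton_append]
      refine append_left_lt (Lex.cons ?_)
      simpa using replicate_false_lt_of_true_mem (l := x.reverse) (by simpa using hx)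
    · intro hr
      obtain ⟨p, w, rfl⟩ := exists_eq_replicate_false_append_true hx
      simp only [reverse_append, reverse_cons, reverse_replicate, append_assoc,
        cons_append] at hr ⊢
      have hpz : p ≤ z := by
        by_contra! hzp
        exact lt_asymm hr (replicate_false_append_lt hzp _ _)
      exact replicate_false_append_lt (by omega) _ _
  · obtain ⟨τ, rfl⟩ : ∃ τ, x = replicate τ false :=
      ⟨_, eq_replicate_iff.2 ⟨rfl, by simpa using hx⟩⟩
    rw [replicate_append_replicate, length_replicate]
    exact h.insert_zero_row (by simpa using hP) _

section Rows

variable (C : Finset (ℤ × ℤ)) (n m : ℕ)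

def row (y : ℤ) : List Bool :=
  (range n).map fun x : ℕ => decide (((x : ℤ), y) ∈ C)

def rows : List (List Bool) :=
  (range m).map fun y : ℕ => row C n y

theorem reverse_row (y : ℤ) :
    (row C n y).reverse = (range n).map fun x : ℕ => decide (((n : ℤ) - 1 - x, y) ∈ C) := by
  rw [row, reverse_map_range]
  refine map_congr_left fun x hx => ?_
  rw [mem_range] at hx
  rw [Nat.cast_sub (by omega), Nat.cast_sub (by omega), Nat.cast_one]

theorem lamAB_eq_flatten_rows : lamAB C n m = (rows C n m).flatten := rfl

theorem lamBA_eq_flatten_rows : lamBA C n m = ((rows C n m).map reverse).flatten := by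
  simp only [lamBA, scanStr, flatMap_def, rows, map_map, Function.comp_def, reverse_row]

theorem lamDC_eq_flatten_rows : lamDC C n m = (rows C n m).reverse.flatten := by
  rw [lamDC, scanStr, flatMap_def, rows, reverse_map_range]
  congr 1
  refine map_congr_left fun y hy => ?_
  rw [mem_range] at hy
  rw [row, Nat.cast_sub (by omega), Nat.cast_sub (by omega), Nat.cast_one]

theorem lamCD_eq_flatten_rows : lamCD C n m = ((rows C n m).map reverse).reverse.flatten := by
  rw [lamCD, scanStr, flatMap_def, rows, map_map, reverse_map_range]
  congr 1
  refine map_congr_left fun y hy => ?_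
  rw [mem_range] at hy
  rw [Function.comp_apply, reverse_row, Nat.cast_sub (by omega), Nat.cast_sub (by omega),
    Nat.cast_one]

@[simp]
theorem length_row (a : ℕ) (y : ℤ) : (row C a y).length = a := by
  simp [row]

theorem row_succ (a : ℕ) (y : ℤ) :
    row C (a + 1) y = row C a y ++ [decide (((a : ℤ), y) ∈ C)] := by
  simp [row, range_succ]

theorem rows_succ : rows C n (m + 1) = rows C n m ++ [row C n m] := by
  simp [rows, range_succ]

end Rows

section RowCongr

variable {C C' : Finset (ℤ × ℤ)}

theorem length_of_mem_rows {n m : ℕ} {b : List Bool} (hb : b ∈ rows C n m) : b.length = n := by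
  obtain ⟨y, -, rfl⟩ := mem_map.1 hb
  exact length_row C n y

theorem row_add_of_forall_not_mem {a k : ℕ} {y : ℤ}
    (h : ∀ i < k, (((a + i : ℕ) : ℤ), y) ∉ C) :
    row C (a + k) y = row C a y ++ replicate k false := by
  rw [row, range_add, map_append, map_map, ← row]
  congr 1
  refine eq_replicate_iff.2 ⟨by simp, ?_⟩
  simpa using h

theorem row_congr {a : ℕ} {y : ℤ}
    (h : ∀ x : ℕ, x < a → ((((x : ℤ), y) ∈ C ↔ ((x : ℤ), y) ∈ C'))) :
    row C a y = row C' a y :=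
  map_congr_left fun x hx => decide_eq_decide.2 (h x (mem_range.1 hx))

theorem rows_congr {n m : ℕ} (h : ∀ y : ℕ, y < m → row C n y = row C' n y) :
    rows C n m = rows C' n m :=
  map_congr_left fun y hy => h y (mem_range.1 hy)

end RowCongr

section Leading

variable {C : Finset (ℤ × ℤ)} {n m : ℕ}

theorem LeadsAB.of_leadingABCfg (h : leadingABCfg C n m) : LeadsAB (rows C n m) := by
  obtain ⟨-, h⟩ := h
  unfold assocStrings at h
  split_ifs at h <;>
  · refine ⟨?_, ?_, ?_⟩ <;>
    [have h' := h 1; have h' := h 2; have h' := h 3] <;>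
    simpa [strings4, strings8, lexLt, lamAB_eq_flatten_rows, lamBA_eq_flatten_rows,
      lamCD_eq_flatten_rows, lamDC_eq_flatten_rows] using h'

theorem leadingABCfg_of_leadsAB (hnm : n ≠ m) (h : LeadsAB (rows C n m)) :
    leadingABCfg C n m := by
  obtain ⟨hBA, hCD, hDC⟩ := h
  refine ⟨by simp [assocStrings, hnm, strings4], fun j hj hj0 => ?_⟩
  simp only [assocStrings, if_neg hnm, strings4, length_cons, length_nil] at hj ⊢
  interval_cases j
  · exact absurd rfl hj0
  · simpa [lexLt, lamAB_eq_flatten_rows, lamBA_eq_flatten_rows] using hBA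
  · simpa [lexLt, lamAB_eq_flatten_rows, lamCD_eq_flatten_rows] using hCD
  · simpa [lexLt, lamAB_eq_flatten_rows, lamDC_eq_flatten_rows] using hDC

end Leading

section Tail

variable {C : Finset (ℤ × ℤ)} {T : ℤ × ℤ}

theorem isTail.snd_le (hT : isTail C T) {p : ℤ × ℤ} (hp : p ∈ C) : p.2 ≤ T.2 := by
  by_cases hpT : p = T
  · rw [hpT]
  · rcases hT.2 p hp hpT with h | ⟨h, -⟩ <;> omega

theorem isTail.fst_le (hT : isTail C T) {p : ℤ × ℤ} (hp : p ∈ C) (h2 : p.2 = T.2) :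
    p.1 ≤ T.1 := by
  by_cases hpT : p = T
  · rw [hpT]
  · rcases hT.2 p hp hpT with h | ⟨-, h⟩ <;> omega

theorem isTail.snd_eq {n m : ℕ} (hser : isSER C n m) (hT : isTail C T) : T.2 = m - 1 := by
  obtain ⟨hbound, -, -, -, p, hp, hp2⟩ := hser
  have := hT.snd_le hp
  have := (hbound T hT.1).2.2.2
  omega

theorem isSER_tailUp {n m : ℕ} (hser : isSER C n m)
    (hT : isTail C T) (hm : 2 ≤ m) :
    isSER (insert (T.1, T.2 + 1) (C.erase T)) n (m + 1) := by
  have hT2 := hT.snd_eq hser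
  obtain ⟨hbound, ⟨pL, hpL, hpL1⟩, ⟨pR, hpR, hpR1⟩, ⟨pB, hpB, hpB2⟩, -⟩ := hser
  have hTb := hbound T hT.1
  have hkeep : ∀ p ∈ C, p ≠ T → p ∈ insert (T.1, T.2 + 1) (C.erase T) :=
    fun p hp hpT => Finset.mem_insert_of_mem (Finset.mem_erase.2 ⟨hpT, hp⟩)
  have hcol : ∀ p ∈ C, ∃ q ∈ insert (T.1, T.2 + 1) (C.erase T), q.1 = p.1 := by
    intro p hp
    by_cases hpT : p = T
    · exact ⟨_, Finset.mem_insert_self _ _, by rw [hpT]⟩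
    · exact ⟨p, hkeep p hp hpT, rfl⟩
  refine ⟨?_, ?_, ?_, ⟨pB, hkeep pB hpB (by rintro rfl; omega), hpB2⟩,
    ⟨_, Finset.mem_insert_self _ _, by push_cast; omega⟩⟩
  · intro p hp
    rcases Finset.mem_insert.1 hp with rfl | hp
    · push_cast
      omega
    · have := hbound p (Finset.mem_of_mem_erase hp)
      push_cast
      omega
  · obtain ⟨q, hq, hq1⟩ := hcol pL hpL
    exact ⟨q, hq, hq1.trans hpL1⟩
  · obtain ⟨q, hq, hq1⟩ := hcol pR hpR
    exact ⟨q, hq, hq1.trans hpR1⟩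

variable {n : ℕ}

theorem rows_succ_of_isTail {τ y : ℕ} (hT : isTail C ((τ : ℤ), (y : ℤ))) (hτn : τ < n) :
    rows C n (y + 1) = rows C n y ++ [row C τ y ++ true :: replicate (n - 1 - τ) false] := by
  obtain ⟨k, rfl⟩ : ∃ k, n = τ + 1 + k := ⟨n - 1 - τ, by omega⟩
  rw [rows_succ, row_add_of_forall_not_mem, row_succ, decide_eq_true hT.1]
  · simp
  · intro i _ hi
    have := hT.fst_le hi rfl
    push_cast at this
    omega

theorem rows_tailUp {τ y : ℕ} (hT : isTail C ((τ : ℤ), (y : ℤ))) (hτn : τ < n) :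
    rows (insert ((τ : ℤ), (y : ℤ) + 1) (C.erase ((τ : ℤ), (y : ℤ)))) n (y + 2) =
      rows C n y ++ [row C τ y ++ replicate (n - τ) false,
        replicate τ false ++ true :: replicate (n - 1 - τ) false] := by
  set C' := insert ((τ : ℤ), (y : ℤ) + 1) (C.erase ((τ : ℤ), (y : ℤ)))
  have hmem : ∀ x y' : ℤ, x ≠ τ ∨ (y' ≠ y ∧ y' ≠ y + 1) →
      ((x, y') ∈ C' ↔ (x, y') ∈ C) := by
    intro x y' h
    simp only [C', Finset.mem_insert, Finset.mem_erase, ne_eq, Prod.mk.injEq]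
    constructor
    · rintro (h' | ⟨-, h'⟩)
      · omega
      · exact h'
    · intro h'
      exact Or.inr ⟨fun ⟨h1, h2⟩ => by omega, h'⟩
  have hbelow : rows C' n y = rows C n y :=
    rows_congr fun y' hy' => row_congr fun x _ => hmem _ _ (by omega)
  have htop : row C' n y = row C τ y ++ replicate (n - τ) false := by
    obtain ⟨k, rfl⟩ : ∃ k, n = τ + k := ⟨n - τ, by omega⟩
    rw [row_add_of_forall_not_mem, row_congr fun x hx => hmem _ _ (by omega)]
    · simp
    · intro i _ hi
      simp only [C', Finset.mem_insert, Finset.mem_erase, ne_eq, Prod.mk.injEq] at hi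
      rcases hi with ⟨-, h⟩ | ⟨hne, hi⟩
      · simp at h
      · have := hT.fst_le hi rfl
        simp only [Nat.cast_add, and_true] at this hne
        omega
  have hnew : row C' n ((y + 1 : ℕ) : ℤ) =
      replicate τ false ++ true :: replicate (n - 1 - τ) false := by
    have hnot : ∀ x : ℕ, x ≠ τ → ((x : ℤ), ((y + 1 : ℕ) : ℤ)) ∉ C' := by
      intro x hx h
      rw [hmem _ _ (by omega)] at h
      have := hT.snd_le h
      push_cast at this
      omega
    obtain ⟨k, rfl⟩ : ∃ k, n = 0 + τ + 1 + k := ⟨n - 1 - τ, by omega⟩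
    rw [row_add_of_forall_not_mem, row_succ, row_add_of_forall_not_mem]
    · simp [row, C']
    · exact fun i _ => hnot _ (by omega)
    · exact fun i _ => hnot _ (by omega)
  rw [rows_succ, rows_succ, hbelow, htop, hnew]
  simp

end Tail

theorem tail_up_keeps_asymmetry_and_leading_corner_general
    (C : Finset (ℤ × ℤ)) (n m : ℕ) (hn : 2 ≤ n) (hnm : n ≤ m)
    (hser : isSER C n m)
    (hlead : leadingABCfg C n m)
    (T : ℤ × ℤ) (hT : isTail C T) :
    isSER (insert (T.1, T.2 + 1) (C.erase T)) n (m + 1) ∧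
    n ≠ m + 1 ∧
    leadingABCfg (insert (T.1, T.2 + 1) (C.erase T)) n (m + 1) := by
  refine ⟨isSER_tailUp hser hT (by omega), by omega, ?_⟩
  have hT2 := hT.snd_eq hser
  have hTb := hser.1 T hT.1
  obtain ⟨k, rfl⟩ : ∃ k, m = k + 2 := ⟨m - 2, by omega⟩
  obtain ⟨τ, hτ⟩ : ∃ τ : ℕ, T.1 = τ := ⟨T.1.toNat, by omega⟩
  obtain rfl : T = ((τ : ℤ), ((k + 1 : ℕ) : ℤ)) := Prod.ext hτ (by push_cast; omega)
  have hτn : τ < n := by omega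
  have hold := LeadsAB.of_leadingABCfg hlead
  rw [rows_succ_of_isTail hT hτn] at hold
  apply leadingABCfg_of_leadsAB (by omega)
  have hnew := hold.tailUp (row C τ _) (n - 1 - τ) fun b hb => by
    rw [length_of_mem_rows hb, length_row]
    omega
  rw [length_row, show n - 1 - τ + 1 = n - τ by omega, ← rows_tailUp hT hτn] at hnew
  simpa using hnew

/-- Let `C` be an asymmetric configuration with `|C| ≥ 3` whose
smallest enclosing rectangle (normalized to corners `A=(0,0)`, `B=(n-1,0)`,
`C=(n-1,m-1)`, `D=(0,m-1)`) has shorter side `|AB| = n ≥ 2` and `|AD| = m ≥ n`,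
and whose unique lexicographically largest associated string is `λ_AB`.  Let `T`
be the tail of `C`, let `u = (0,1)` be the unit vector perpendicular to `AB`
pointing from side `AB` toward side `CD`, and set `C_new = (C \ {T}) ∪ {T + u}`.
Then the smallest enclosing rectangle of `C_new` is the `(m+1) × n` rectangle
obtained from `R` by moving side `CD` one unit in direction `u`, this rectangle
is non-square, and the string of `C_new` read from corner `A` in the direction
of `AB` is its unique lexicographically largest associated string; in particular
`C_new` is asymmetric with leading corner again `A`. -/
theorem tail_up_keeps_asymmetry_and_leading_corner
    (C : Finset (ℤ × ℤ)) (n m : ℕ) (hn : 2 ≤ n) (hnm : n ≤ m)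
    (hcard : 3 ≤ C.card) (hser : isSER C n m)
    (hlead : leadingABCfg C n m)
    (T : ℤ × ℤ) (hT : isTail C T) :
    isSER (insert (T.1, T.2 + 1) (C.erase T)) n (m + 1) ∧
    n ≠ m + 1 ∧
    leadingABCfg (insert (T.1, T.2 + 1) (C.erase T)) n (m + 1) :=
  tail_up_keeps_asymmetry_and_leading_corner_general C n m hn hnm hser hlead T hT
end

section
/- Let C be a configuration whose smallest enclosing rectangle R = ABCD is non-square with shorter sides AB and CD. Suppose the corner A is occupied by a robot of C, the corners C and D are unoccupied, and C is not invariant under the reflection across the grid line parallel to AD that bisects R. Then C is asymmetric and its leading corner is one of the two corners A, B of the shorter side AB. -/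
/-! Since `A` is occupied and `C`, `D` are empty, `λ_AB` begins with `1` while `λ_CD` and `λ_DC`
begin with `0`. Equal scans `λ_AB = λ_BA` would make the configuration invariant under the
reflection, so one of `λ_AB`, `λ_BA` is strictly larger than the other; it begins with `1`
because it dominates `λ_AB`, hence it also beats `λ_CD` and `λ_DC`.

`lexLt` is definitionally the strict order of Mathlib's lexicographic `LinearOrder (List Bool)`,
which is how the order lemmas below apply to it. -/

lemma scanStr_succ (C : Finset (ℤ × ℤ)) (M N : ℕ) (f : ℕ → ℕ → ℤ × ℤ) :
    scanStr C (M + 1) N f =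
      scanStr C M N f ++ (List.range N).map (fun j => decide (f M j ∈ C)) := by
  simp only [scanStr, List.range_succ, List.flatMap_append, List.flatMap_cons,
    List.flatMap_nil, List.append_nil]

lemma scanStr_eq_cons (C : Finset (ℤ × ℤ)) {M N : ℕ} (hM : 0 < M) (hN : 0 < N)
    (f : ℕ → ℕ → ℤ × ℤ) : ∃ l, scanStr C M N f = decide (f 0 0 ∈ C) :: l := by
  obtain ⟨M, rfl⟩ := Nat.exists_eq_add_one_of_ne_zero hM.ne'
  obtain ⟨N, rfl⟩ := Nat.exists_eq_add_one_of_ne_zero hN.ne'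
  simp [scanStr, List.range_succ_eq_map]

lemma mem_iff_mem_of_scanStr_eq (C : Finset (ℤ × ℤ)) {M N : ℕ} {f g : ℕ → ℕ → ℤ × ℤ}
    (h : scanStr C M N f = scanStr C M N g) {i j : ℕ} (hi : i < M) (hj : j < N) :
    f i j ∈ C ↔ g i j ∈ C := by
  induction M with
  | zero => omega
  | succ M ih =>
    rw [scanStr_succ, scanStr_succ] at h
    obtain ⟨hinit, hlast⟩ := List.append_inj' h (by simp)
    rcases Nat.lt_succ_iff_lt_or_eq.mp hi with hi | rfl
    · exact ih hinit hi
    · simpa using List.map_inj_left.mp hlast j (List.mem_range.mpr hj)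

section Corners

variable (C : Finset (ℤ × ℤ)) {n m : ℕ}

lemma lamAB_eq_cons (hn : 0 < n) (hm : 0 < m) :
    ∃ l, lamAB C n m = decide (((0 : ℤ), (0 : ℤ)) ∈ C) :: l := by
  simpa [lamAB] using scanStr_eq_cons C hm hn (fun y x => ((x : ℤ), (y : ℤ)))

lemma lamBA_eq_cons (hn : 0 < n) (hm : 0 < m) :
    ∃ l, lamBA C n m = decide (((n : ℤ) - 1, (0 : ℤ)) ∈ C) :: l := by
  simpa [lamBA] using scanStr_eq_cons C hm hn (fun y x => ((n : ℤ) - 1 - x, (y : ℤ)))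

lemma lamCD_eq_cons (hn : 0 < n) (hm : 0 < m) :
    ∃ l, lamCD C n m = decide (((n : ℤ) - 1, (m : ℤ) - 1) ∈ C) :: l := by
  simpa [lamCD] using scanStr_eq_cons C hm hn (fun y x => ((n : ℤ) - 1 - x, (m : ℤ) - 1 - y))

lemma lamDC_eq_cons (hn : 0 < n) (hm : 0 < m) :
    ∃ l, lamDC C n m = decide (((0 : ℤ), (m : ℤ) - 1) ∈ C) :: l := by
  simpa [lamDC] using scanStr_eq_cons C hm hn (fun y x => ((x : ℤ), (m : ℤ) - 1 - y))

end Corners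

lemma image_reflect_eq_self_of_lamAB_eq_lamBA {C : Finset (ℤ × ℤ)} {n m : ℕ}
    (hC : ∀ p ∈ C, 0 ≤ p.1 ∧ p.1 ≤ (n : ℤ) - 1 ∧ 0 ≤ p.2 ∧ p.2 ≤ (m : ℤ) - 1)
    (h : lamAB C n m = lamBA C n m) :
    C.image (fun p => ((n : ℤ) - 1 - p.1, p.2)) = C := by
  have hreflect : ∀ p ∈ C, ((n : ℤ) - 1 - p.1, p.2) ∈ C := by
    rintro ⟨x, y⟩ hp
    obtain ⟨hx0, hx1, hy0, hy1⟩ := hC _ hp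
    lift x to ℕ using hx0
    lift y to ℕ using hy0
    exact (mem_iff_mem_of_scanStr_eq C h (by omega) (by omega)).mp hp
  refine Finset.Subset.antisymm (Finset.image_subset_iff.mpr hreflect) fun p hp => ?_
  exact Finset.mem_image.mpr ⟨_, hreflect p hp, by simp⟩

lemma eq_true_of_true_cons_lt {b : Bool} {l₁ l₂ : List Bool} (h : true :: l₁ < b :: l₂) :
    b = true :=
  top_unique (List.head_le_of_lt h)

lemma false_cons_lt_true_cons (l₁ l₂ : List Bool) : false :: l₁ < true :: l₂ :=
  List.Lex.rel (by decide)

lemma uniqueMaxAt_four_zero {a b c d : List Bool} (hb : b < a) (hc : c < a) (hd : d < a) :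
    uniqueMaxAt [a, b, c, d] 0 := by
  refine ⟨by simp, fun j hj hj0 => ?_⟩
  simp only [List.length_cons, List.length_nil] at hj
  interval_cases j <;> first | omega | assumption

lemma uniqueMaxAt_four_one {a b c d : List Bool} (ha : a < b) (hc : c < b) (hd : d < b) :
    uniqueMaxAt [a, b, c, d] 1 := by
  refine ⟨by simp, fun j hj hj1 => ?_⟩
  simp only [List.length_cons, List.length_nil] at hj
  interval_cases j <;> first | omega | assumption

lemma asymmetricCfg_of_uniqueMaxAt_strings4 {C : Finset (ℤ × ℤ)} {n m : ℕ} (hnm : n ≠ m)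
    {i : ℕ} (h : uniqueMaxAt (strings4 C n m) i) : asymmetricCfg C n m :=
  ⟨i, by rwa [assocStrings, if_neg hnm]⟩

/-- Let `C` be a configuration whose smallest enclosing
rectangle (normalized to corners `A=(0,0)`, `B=(n-1,0)`, `C=(n-1,m-1)`,
`D=(0,m-1)`) is non-square with shorter sides `AB` and `CD` (so `n < m`).
Suppose the corner `A` is occupied by a robot of `C`, the corners `C` and `D`
are unoccupied, and `C` is not invariant under the reflection
`(x, y) ↦ (n-1-x, y)` across the grid line parallel to `AD` that bisects `R`.
Then `C` is asymmetric and its leading corner is one of the two corners `A`,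
`B` of the shorter side `AB` (i.e. the unique largest associated string is
`λ_AB` or `λ_BA`). -/
theorem leading_corner_on_side_AB
    (C : Finset (ℤ × ℤ)) (n m : ℕ) (hn : 1 ≤ n) (hnm : n < m)
    (hser : isSER C n m)
    (hA : ((0 : ℤ), (0 : ℤ)) ∈ C)
    (hC : ((n : ℤ) - 1, (m : ℤ) - 1) ∉ C)
    (hD : ((0 : ℤ), (m : ℤ) - 1) ∉ C)
    (hnosym : C.image (fun p => ((n : ℤ) - 1 - p.1, p.2)) ≠ C) :
    asymmetricCfg C n m ∧
    (uniqueMaxAt (strings4 C n m) 0 ∨ uniqueMaxAt (strings4 C n m) 1) := by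
  have hm : 0 < m := by omega
  obtain ⟨a, hAB⟩ := lamAB_eq_cons C hn hm
  obtain ⟨c, hCD⟩ := lamCD_eq_cons C hn hm
  obtain ⟨d, hDC⟩ := lamDC_eq_cons C hn hm
  rw [decide_eq_true hA] at hAB
  rw [decide_eq_false hC] at hCD
  rw [decide_eq_false hD] at hDC
  have hne : lamAB C n m ≠ lamBA C n m :=
    fun h => hnosym (image_reflect_eq_self_of_lamAB_eq_lamBA hser.1 h)
  have hmax : uniqueMaxAt (strings4 C n m) 0 ∨ uniqueMaxAt (strings4 C n m) 1 := by
    rcases lt_or_gt_of_ne hne with hlt | hlt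
    · obtain ⟨b, hBA⟩ := lamBA_eq_cons C hn hm
      rw [hAB, hBA] at hlt
      have hB := eq_true_of_true_cons_lt hlt
      rw [hB] at hlt hBA
      refine .inr ?_
      rw [strings4, hAB, hBA, hCD, hDC]
      exact uniqueMaxAt_four_one hlt (false_cons_lt_true_cons ..) (false_cons_lt_true_cons ..)
    · refine .inl ?_
      rw [hAB] at hlt
      rw [strings4, hAB, hCD, hDC]
      exact uniqueMaxAt_four_zero hlt (false_cons_lt_true_cons ..) (false_cons_lt_true_cons ..)
  exact ⟨hmax.elim (asymmetricCfg_of_uniqueMaxAt_strings4 hnm.ne)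
    (asymmetricCfg_of_uniqueMaxAt_strings4 hnm.ne), hmax⟩
end

section
/- Let n ≥ 2 and k = n². Let Q = {a, a+1, …, a+n−1} × {b, b+1, …, b+n−1} ⊂ ℤ² be an n × n block of grid points and let L = {(c, d), (c+1, d), …, (c+k−1, d)} ⊂ ℤ² be k consecutive grid points on a horizontal grid line. Then for every bijection f : Q → L there exists q ∈ Q with 2·(|f(q)₁ − q₁| + |f(q)₂ − q₂|) ≥ k − n. Consequently, in any relocation of k = n² robots initially occupying Q to final positions occupying L, some robot must make at least (k − √k)/2 unit moves along grid edges. -/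
open Set

/-- The preimages of `p` and `p'` start at most `w` apart horizontally, so their two horizontal
displacements sum to at least `p'.1 - p.1 - w`, and the larger one is at least half of that. -/
lemma exists_two_mul_abs_fst_sub_ge {f : ℤ × ℤ → ℤ × ℤ} {s : Set (ℤ × ℤ)} {a w : ℤ}
    (hs : ∀ q ∈ s, q.1 ∈ Icc a (a + w)) {p p' : ℤ × ℤ} (hp : p ∈ f '' s) (hp' : p' ∈ f '' s) :
    ∃ q ∈ s, p'.1 - p.1 - w ≤ 2 * |(f q).1 - q.1| := by
  obtain ⟨q, hq, rfl⟩ := hp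
  obtain ⟨q', hq', rfl⟩ := hp'
  obtain ⟨hqa, hqw⟩ := hs q hq
  obtain ⟨hq'a, hq'w⟩ := hs q' hq'
  have hsum : (f q').1 - (f q).1 - w ≤ |(f q).1 - q.1| + |(f q').1 - q'.1| := by
    linarith [neg_abs_le ((f q).1 - q.1), le_abs_self ((f q').1 - q'.1)]
  rcases le_total |(f q).1 - q.1| |(f q').1 - q'.1| with h | h
  · exact ⟨q', hq', by linarith⟩
  · exact ⟨q, hq, by linarith⟩

theorem some_robot_moves_far_general
    (n : ℕ) (hn : 2 ≤ n) (k : ℕ) (a b c d : ℤ)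
    (f : ℤ × ℤ → ℤ × ℤ)
    (hf : Set.BijOn f
      ((Set.Icc a (a + (n : ℤ) - 1)) ×ˢ (Set.Icc b (b + (n : ℤ) - 1)))
      ((Set.Icc c (c + (k : ℤ) - 1)) ×ˢ ({d} : Set ℤ))) :
    ∃ q ∈ (Set.Icc a (a + (n : ℤ) - 1)) ×ˢ (Set.Icc b (b + (n : ℤ) - 1)),
      2 * (|(f q).1 - q.1| + |(f q).2 - q.2|) ≥ (k : ℤ) - (n : ℤ) := by
  have hn_pos : (1 : ℤ) ≤ n := by exact_mod_cast (by omega : 1 ≤ n)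
  have hcorner : (a, b) ∈ Icc a (a + (n : ℤ) - 1) ×ˢ Icc b (b + (n : ℤ) - 1) :=
    ⟨⟨le_rfl, by linarith⟩, ⟨le_rfl, by linarith⟩⟩
  have hk_pos : (1 : ℤ) ≤ k := by
    have := (hf.mapsTo hcorner).1.1.trans (hf.mapsTo hcorner).1.2
    linarith
  have hL : ∀ x ∈ Icc c (c + (k : ℤ) - 1),
      (x, d) ∈ f '' (Icc a (a + (n : ℤ) - 1) ×ˢ Icc b (b + (n : ℤ) - 1)) := fun x hx ↦
    hf.surjOn ⟨hx, rfl⟩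
  obtain ⟨q, hq, hfar⟩ := exists_two_mul_abs_fst_sub_ge (w := n - 1) (fun q hq ↦ by
      simpa only [add_sub_assoc] using hq.1)
    (hL c ⟨le_rfl, by linarith⟩) (hL (c + k - 1) ⟨by linarith, le_rfl⟩)
  refine ⟨q, hq, ?_⟩
  linarith [abs_nonneg ((f q).2 - q.2)]

/-- Let `n ≥ 2` and `k = n²`.  Let
`Q = {a, …, a+n-1} × {b, …, b+n-1} ⊂ ℤ²` be an `n × n` block of grid points and
let `L = {(c, d), …, (c+k-1, d)}` be `k` consecutive grid points on a horizontal
grid line.  Then for every bijection `f : Q → L` there exists `q ∈ Q` with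
`2·(|f(q)₁ - q₁| + |f(q)₂ - q₂|) ≥ k - n`.  Consequently, in any relocation of
`k = n²` robots initially occupying `Q` to final positions occupying `L`, some
robot must make at least `(k - √k)/2 = (k - n)/2` unit moves along grid
edges. -/
theorem some_robot_moves_far
    (n : ℕ) (hn : 2 ≤ n) (k : ℕ) (hk : k = n ^ 2) (a b c d : ℤ)
    (f : ℤ × ℤ → ℤ × ℤ)
    (hf : Set.BijOn f
      ((Set.Icc a (a + (n : ℤ) - 1)) ×ˢ (Set.Icc b (b + (n : ℤ) - 1)))
      ((Set.Icc c (c + (k : ℤ) - 1)) ×ˢ ({d} : Set ℤ))) :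
    ∃ q ∈ (Set.Icc a (a + (n : ℤ) - 1)) ×ˢ (Set.Icc b (b + (n : ℤ) - 1)),
      2 * (|(f q).1 - q.1| + |(f q).2 - q.2|) ≥ (k : ℤ) - (n : ℤ) :=
  some_robot_moves_far_general n hn k a b c d f hf
end

section
/- Let C be a configuration whose smallest enclosing rectangle, after translating so that its corners are A = (0,0), B = (n−1, 0), C = (n−1, m−1), D = (0, m−1), has width n ≥ 1 and height m ≥ 1. Define σ_h : ℤ² → ℤ² by σ_h(x, y) = (x, m−1−y) (reflection across the horizontal line bisecting the rectangle). Then λ_AB = λ_DC if and only if σ_h maps C onto C, i.e. C is invariant under reflection across the horizontal bisector of its smallest enclosing rectangle. -/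
/-! Both strings read the rows of the rectangle with `x` ascending, `λ_DC` taking
row `m-1-y` where `λ_AB` takes row `y`. As all rows have the same length, the
strings agree exactly when every grid point `(x, y)` of the rectangle and its
mirror image `(x, m-1-y)` are both occupied or both empty; since `C` lies in
the rectangle, this says that the involution `σ_h` maps `C` into, hence onto,
itself. -/

theorem List.flatMap_range_eq_iff {α : Type*} {f g : ℕ → List α}
    (hfg : ∀ i, (f i).length = (g i).length) {M : ℕ} :
    (List.range M).flatMap f = (List.range M).flatMap g ↔ ∀ i < M, f i = g i := by
  induction M with
  | zero => simp
  | succ M ih =>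
    simp only [List.range_succ, List.flatMap_append, List.flatMap_singleton]
    constructor
    · intro h i hi
      obtain ⟨hinit, hlast⟩ := List.append_inj' h (hfg M)
      rcases Nat.lt_succ_iff_lt_or_eq.mp hi with hi | rfl
      · exact ih.mp hinit i hi
      · exact hlast
    · intro h
      rw [ih.mpr fun i hi => h i (Nat.lt_succ_of_lt hi), h M M.lt_succ_self]

theorem scanStr_eq_scanStr_iff (C : Finset (ℤ × ℤ)) {M N : ℕ} {f g : ℕ → ℕ → ℤ × ℤ} :
    scanStr C M N f = scanStr C M N g ↔ ∀ i < M, ∀ j < N, (f i j ∈ C ↔ g i j ∈ C) := by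
  rw [scanStr, scanStr, List.flatMap_range_eq_iff (by simp)]
  simp [List.map_inj_left, decide_eq_decide]

theorem Function.Involutive.finset_image_eq_self_iff {α : Type*} [DecidableEq α] {f : α → α}
    (hf : f.Involutive) {s : Finset α} : s.image f = s ↔ ∀ x ∈ s, f x ∈ s := by
  refine ⟨fun h x hx => h ▸ Finset.mem_image_of_mem f hx, fun h => ?_⟩
  refine (Finset.image_subset_iff.mpr h).antisymm fun x hx => ?_
  exact Finset.mem_image.mpr ⟨f x, h x hx, hf x⟩

/-- The reflection `σ_h` of the paper. -/
def hReflect (m : ℕ) (p : ℤ × ℤ) : ℤ × ℤ := (p.1, (m : ℤ) - 1 - p.2)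

theorem hReflect_involutive (m : ℕ) : (hReflect m).Involutive := fun p => by
  simp [hReflect]

theorem lamDC_eq_scanStr_hReflect (C : Finset (ℤ × ℤ)) (n m : ℕ) :
    lamDC C n m = scanStr C m n (fun y x => hReflect m ((x : ℤ), (y : ℤ))) :=
  rfl

theorem grid_symmetric_iff_forall_hReflect_mem {C : Finset (ℤ × ℤ)} {n m : ℕ}
    (hC : ∀ p ∈ C, 0 ≤ p.1 ∧ p.1 ≤ (n : ℤ) - 1 ∧ 0 ≤ p.2 ∧ p.2 ≤ (m : ℤ) - 1) :
    (∀ y < m, ∀ x < n, (((x : ℤ), (y : ℤ)) ∈ C ↔ hReflect m ((x : ℤ), (y : ℤ)) ∈ C)) ↔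
      ∀ p ∈ C, hReflect m p ∈ C := by
  constructor
  · rintro h ⟨x, y⟩ hp
    obtain ⟨hx0, hxn, hy0, hym⟩ := hC _ hp
    lift x to ℕ using hx0
    lift y to ℕ using hy0
    exact (h y (by omega) x (by omega)).mp hp
  · intro h y _ x _
    exact ⟨h _, fun hp => hReflect_involutive m (x, y) ▸ h _ hp⟩

theorem lamAB_eq_lamDC_iff_horizontal_reflection_invariant_general
    (C : Finset (ℤ × ℤ)) (n m : ℕ)
    (hser : isSER C n m) :
    lamAB C n m = lamDC C n m ↔
      C.image (fun p => (p.1, (m : ℤ) - 1 - p.2)) = C := by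
  rw [lamAB, lamDC_eq_scanStr_hReflect, scanStr_eq_scanStr_iff,
    grid_symmetric_iff_forall_hReflect_mem hser.1]
  exact ((hReflect_involutive m).finset_image_eq_self_iff).symm

/-- Let `C` be a configuration whose smallest enclosing
rectangle, after translation, has corners `A = (0,0)`, `B = (n-1,0)`,
`C = (n-1,m-1)`, `D = (0,m-1)` with `n ≥ 1`, `m ≥ 1`.  Define
`σ_h(x, y) = (x, m-1-y)` (reflection across the horizontal line bisecting the
rectangle).  Then `λ_AB = λ_DC` if and only if `σ_h` maps `C` onto `C`, i.e.
`C` is invariant under reflection across the horizontal bisector of its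
smallest enclosing rectangle. -/
theorem lamAB_eq_lamDC_iff_horizontal_reflection_invariant
    (C : Finset (ℤ × ℤ)) (n m : ℕ) (hn : 1 ≤ n) (hm : 1 ≤ m)
    (hser : isSER C n m) :
    lamAB C n m = lamDC C n m ↔
      C.image (fun p => (p.1, (m : ℤ) - 1 - p.2)) = C :=
  lamAB_eq_lamDC_iff_horizontal_reflection_invariant_general C n m hser
end

section
/- Let C be a configuration whose smallest enclosing rectangle R is the square with corners A = (0,0), B = (n−1,0), C = (n−1,n−1), D = (0,n−1) after translation, n ≥ 2. Then the following are equivalent: (1) among the eight associated strings λ_AB, λ_BA, λ_CD, λ_DC, λ_BC, λ_CB, λ_AD, λ_DA there is a unique lexicographically largest one (C is asymmetric); (2) no nontrivial element of the dihedral group of order 8 of symmetries of the square R (the rotations by 90°, 180°, 270° about its centre and the four reflections across its horizontal, vertical and two diagonal bisectors) maps C onto C. -/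
/-! The eight associated strings are the strings `λ_AB` of the eight images `g • C` of `C`
under the dihedral group of the square, and `λ_AB` determines a configuration inside the
square. So `λ_AB (g • C) = λ_AB (h • C)` exactly when `g⁻¹ h` fixes `C`. If a nontrivial `k`
fixes `C`, the largest string `λ_AB (g • C)` recurs as `λ_AB (g k • C)`; if only the identity
does, the eight strings are distinct and the largest one is unique. -/

namespace SquareConfig

open DihedralGroup

theorem exists_forall_ne_lt_iff_stabilizer_eq_bot {G X α : Type*} [Group G] [Finite G]
    [MulAction G X] [LinearOrder α] {F : X → α} {x : X}
    (hF : Set.InjOn F (MulAction.orbit G x)) :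
    (∃ g : G, ∀ h ≠ g, F (h • x) < F (g • x)) ↔ MulAction.stabilizer G x = ⊥ := by
  constructor
  · rintro ⟨g, hg⟩
    refine (Subgroup.eq_bot_iff_forall _).2 fun k hk => by_contra fun hk1 => ?_
    have hlt := hg (g * k) (mul_ne_left.2 hk1)
    rw [mul_smul, MulAction.mem_stabilizer_iff.1 hk] at hlt
    exact hlt.false
  · intro hstab
    obtain ⟨g, hg⟩ := Finite.exists_max fun g : G => F (g • x)
    refine ⟨g, fun h hne => (hg h).lt_of_ne fun heq => hne ?_⟩
    have hhg : h • x = g • x := hF (MulAction.mem_orbit x h) (MulAction.mem_orbit x g) heq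
    have hmem : g⁻¹ * h ∈ MulAction.stabilizer G x := by
      rw [MulAction.mem_stabilizer_iff, mul_smul, hhg, inv_smul_smul]
    rwa [hstab, Subgroup.mem_bot, inv_mul_eq_one, eq_comm] at hmem

theorem exists_uniqueMaxAt_map_iff {G : Type*} {L : List G} (hnodup : L.Nodup)
    (hmem : ∀ g, g ∈ L) (s : G → List Bool) :
    (∃ i, uniqueMaxAt (L.map s) i) ↔ ∃ g, ∀ h ≠ g, s h < s g := by
  have getD_map : ∀ i (hi : i < L.length), (L.map s).getD i [] = s L[i] := fun i hi => by
    simp [hi]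
  constructor
  · rintro ⟨i, hi, hmax⟩
    rw [List.length_map] at hi
    refine ⟨L[i], fun h hne => ?_⟩
    obtain ⟨j, hj, rfl⟩ := List.getElem_of_mem (hmem h)
    have hji : j ≠ i := by rintro rfl; exact hne rfl
    have := hmax j (by simpa using hj) hji
    rwa [getD_map i hi, getD_map j hj] at this
  · rintro ⟨g, hg⟩
    obtain ⟨i, hi, rfl⟩ := List.getElem_of_mem (hmem g)
    refine ⟨i, by simpa using hi, fun j hj hji => ?_⟩
    rw [List.length_map] at hj
    rw [getD_map i hi, getD_map j hj]
    exact hg _ fun h => hji ((hnodup.getElem_inj_iff).1 h)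

theorem scanStr_eq_map (C : Finset (ℤ × ℤ)) (M N : ℕ) (f : ℕ → ℕ → ℤ × ℤ) :
    scanStr C M N f = ((List.range M).flatMap fun i => (List.range N).map (i, ·)).map
      fun ij => decide (f ij.1 ij.2 ∈ C) := by
  simp [scanStr, List.map_flatMap, Function.comp_def]

theorem scanStr_eq_scanStr_iff {C D : Finset (ℤ × ℤ)} {M N : ℕ} {f g : ℕ → ℕ → ℤ × ℤ} :
    scanStr C M N f = scanStr D M N g ↔ ∀ i < M, ∀ j < N, (f i j ∈ C ↔ g i j ∈ D) := by
  rw [scanStr_eq_map, scanStr_eq_map, List.map_inj_left]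
  simp only [List.mem_flatMap, List.mem_range, List.mem_map, decide_eq_decide]
  constructor
  · exact fun h i hi j hj => h (i, j) ⟨i, hi, j, hj, rfl⟩
  · rintro h _ ⟨i, hi, j, hj, rfl⟩
    exact h i hi j hj

def gridSquare (c : ℤ) : Set (ℤ × ℤ) := Set.Icc 0 c ×ˢ Set.Icc 0 c

theorem lamAB_injOn (n : ℕ) :
    Set.InjOn (fun D => lamAB D n n) {D : Finset (ℤ × ℤ) | ↑D ⊆ gridSquare ((n : ℤ) - 1)} := by
  intro D hD D' hD' h
  have hpt := scanStr_eq_scanStr_iff.1 h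
  ext ⟨x, y⟩
  by_cases hxy : (x, y) ∈ gridSquare ((n : ℤ) - 1)
  · obtain ⟨⟨hx0, hx1⟩, hy0, hy1⟩ := hxy
    simpa [Int.toNat_of_nonneg hx0, Int.toNat_of_nonneg hy0] using
      hpt y.toNat (by omega) x.toNat (by omega)
  · exact ⟨fun hm => absurd (hD hm) hxy, fun hm => absurd (hD' hm) hxy⟩

def rotate (c : ℤ) (p : ℤ × ℤ) : ℤ × ℤ := (c - p.2, p.1)

def reflect (c : ℤ) (p : ℤ × ℤ) : ℤ × ℤ := (c - p.1, p.2)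

theorem rotate_iterate_four (c : ℤ) : (rotate c)^[4] = id := by
  funext p
  simp [rotate]

theorem rotate_iterate_mod_four (c : ℤ) (k : ℕ) : (rotate c)^[k % 4] = (rotate c)^[k] := by
  conv_rhs => rw [← Nat.mod_add_div k 4, Function.iterate_add, Function.iterate_mul,
    rotate_iterate_four, Function.iterate_id, Function.comp_id]

theorem reflect_reflect (c : ℤ) (p : ℤ × ℤ) : reflect c (reflect c p) = p := by
  simp [reflect]

theorem rotate_iterate_reflect (c : ℤ) (k : ℕ) (p : ℤ × ℤ) :
    (rotate c)^[k] (reflect c p) = reflect c ((rotate c)^[3 * k] p) := by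
  induction k generalizing p with
  | zero => rfl
  | succ k ih =>
    have hrot : rotate c (reflect c p) = reflect c ((rotate c)^[3] p) := by
      simp [rotate, reflect]
    rw [Function.iterate_succ_apply, hrot, ih, mul_add, mul_one,
      Function.iterate_add_apply]

def squareSmul (c : ℤ) : DihedralGroup 4 → ℤ × ℤ → ℤ × ℤ
  | .r i, p => (rotate c)^[i.val] p
  | .sr i, p => reflect c ((rotate c)^[i.val] p)

theorem squareSmul_mul (c : ℤ) (g h : DihedralGroup 4) (p : ℤ × ℤ) :
    squareSmul c (g * h) p = squareSmul c g (squareSmul c h p) := by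
  have hadd : ∀ i j : ZMod 4, (i + j).val = (i.val + j.val) % 4 := by decide
  have hsub : ∀ i j : ZMod 4, (j - i).val = (3 * i.val + j.val) % 4 := by decide
  rcases g with i | i <;> rcases h with j | j <;>
    simp only [r_mul_r, r_mul_sr, sr_mul_r, sr_mul_sr, squareSmul, hadd, hsub,
      rotate_iterate_mod_four, rotate_iterate_reflect, reflect_reflect,
      Function.iterate_add_apply]

theorem squareSmul_one (c : ℤ) (p : ℤ × ℤ) : squareSmul c 1 p = p := rfl

theorem squareSmul_injective (c : ℤ) (g : DihedralGroup 4) :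
    Function.Injective (squareSmul c g) :=
  Function.LeftInverse.injective (g := squareSmul c g⁻¹) fun p => by
    rw [← squareSmul_mul, inv_mul_cancel, squareSmul_one]

theorem squareSmul_mem_gridSquare (c : ℤ) (g : DihedralGroup 4) {p : ℤ × ℤ}
    (hp : p ∈ gridSquare c) : squareSmul c g p ∈ gridSquare c := by
  have hrot : Set.MapsTo (rotate c) (gridSquare c) (gridSquare c) := by
    rintro ⟨x, y⟩ ⟨⟨hx0, hx1⟩, hy0, hy1⟩
    exact ⟨⟨by simp [rotate]; omega, by simp [rotate]; omega⟩, hx0, hx1⟩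
  have hrefl : Set.MapsTo (reflect c) (gridSquare c) (gridSquare c) := by
    rintro ⟨x, y⟩ ⟨⟨hx0, hx1⟩, hy0, hy1⟩
    exact ⟨⟨by simp [reflect]; omega, by simp [reflect]; omega⟩, hy0, hy1⟩
  rcases g with i | i
  · exact hrot.iterate _ hp
  · exact hrefl (hrot.iterate _ hp)

abbrev squareAction (c : ℤ) : MulAction (DihedralGroup 4) (Finset (ℤ × ℤ)) where
  smul g C := C.image (squareSmul c g)
  one_smul _ := Finset.image_id'
  mul_smul g h C := by
    change C.image _ = (C.image _).image _
    rw [Finset.image_image]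
    exact congrArg C.image (funext (squareSmul_mul c g h))

theorem lamAB_image_squareSmul (C : Finset (ℤ × ℤ)) (n : ℕ) (g : DihedralGroup 4)
    {f : ℕ → ℕ → ℤ × ℤ} (hf : ∀ i j, squareSmul ((n : ℤ) - 1) g (f i j) = ((j : ℤ), (i : ℤ))) :
    lamAB (C.image (squareSmul ((n : ℤ) - 1) g)) n n = scanStr C n n f := by
  refine scanStr_eq_scanStr_iff.2 fun i _ j _ => ?_
  rw [← hf, (squareSmul_injective _ g).mem_finset_image]

section Elements

variable (c : ℤ)

theorem squareSmul_r_one : squareSmul c (r 1) = fun p => (c - p.2, p.1) := rfl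

theorem squareSmul_r_two : squareSmul c (r 2) = fun p => (c - p.1, c - p.2) := rfl

theorem squareSmul_r_three : squareSmul c (r 3) = fun p => (p.2, c - p.1) := by
  funext p
  change rotate c (rotate c (rotate c p)) = _
  simp [rotate]

theorem squareSmul_sr_zero : squareSmul c (sr 0) = fun p => (c - p.1, p.2) := rfl

theorem squareSmul_sr_one : squareSmul c (sr 1) = fun p => (p.2, p.1) := by
  funext p
  change reflect c (rotate c p) = _
  simp [rotate, reflect]

theorem squareSmul_sr_two : squareSmul c (sr 2) = fun p => (p.1, c - p.2) := by
  funext p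
  change reflect c (rotate c (rotate c p)) = _
  simp [rotate, reflect]

theorem squareSmul_sr_three : squareSmul c (sr 3) = fun p => (c - p.2, c - p.1) := by
  funext p
  change reflect c (rotate c (rotate c (rotate c p))) = _
  simp [rotate, reflect]

end Elements

theorem dihedralGroup_four_forall_ne_one_iff {P : DihedralGroup 4 → Prop} :
    (∀ g, g ≠ 1 → P g) ↔
      P (r 1) ∧ P (r 2) ∧ P (r 3) ∧ P (sr 2) ∧ P (sr 0) ∧ P (sr 1) ∧ P (sr 3) := by
  refine ⟨fun h => ⟨h _ (by decide), h _ (by decide), h _ (by decide), h _ (by decide),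
    h _ (by decide), h _ (by decide), h _ (by decide)⟩, ?_⟩
  rintro ⟨h1, h2, h3, h4, h5, h6, h7⟩ (i | i) hg <;> fin_cases i
  exacts [absurd rfl hg, h1, h2, h3, h5, h6, h4, h7]

theorem strings8_eq_map (C : Finset (ℤ × ℤ)) (n : ℕ) :
    strings8 C n n = [1, sr 0, r 2, sr 2, r 3, sr 3, sr 1, r 1].map
      fun g => lamAB (C.image (squareSmul ((n : ℤ) - 1) g)) n n := by
  simp only [strings8, List.map_cons, List.map_nil, List.cons.injEq, and_true]
  refine ⟨?_, ?_, ?_, ?_, ?_, ?_, ?_, ?_⟩ <;>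
    refine (lamAB_image_squareSmul C n _ fun i j => ?_).symm
  all_goals simp [squareSmul_one, squareSmul_r_two, squareSmul_r_three, squareSmul_r_one,
    squareSmul_sr_zero, squareSmul_sr_one, squareSmul_sr_two, squareSmul_sr_three]

end SquareConfig

open SquareConfig in
theorem square_asymmetric_iff_no_nontrivial_dihedral_symmetry_general
    (C : Finset (ℤ × ℤ)) (n : ℕ)
    (hser : isSER C n n) :
    (∃ i, uniqueMaxAt (strings8 C n n) i) ↔
      (C.image (fun p => ((n : ℤ) - 1 - p.2, p.1)) ≠ C ∧          -- rotation 90°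
       C.image (fun p => ((n : ℤ) - 1 - p.1, (n : ℤ) - 1 - p.2)) ≠ C ∧  -- rotation 180°
       C.image (fun p => (p.2, (n : ℤ) - 1 - p.1)) ≠ C ∧          -- rotation 270°
       C.image (fun p => (p.1, (n : ℤ) - 1 - p.2)) ≠ C ∧          -- horizontal bisector
       C.image (fun p => ((n : ℤ) - 1 - p.1, p.2)) ≠ C ∧          -- vertical bisector
       C.image (fun p => (p.2, p.1)) ≠ C ∧                        -- diagonal y = x
       C.image (fun p => ((n : ℤ) - 1 - p.2, (n : ℤ) - 1 - p.1)) ≠ C) := by  -- antidiagonal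
  let := squareAction ((n : ℤ) - 1)
  have hinj : Set.InjOn (fun D => lamAB D n n) (MulAction.orbit (DihedralGroup 4) C) := by
    refine (lamAB_injOn n).mono ?_
    rintro _ ⟨g, rfl⟩ _ hp
    obtain ⟨q, hq, rfl⟩ := Finset.mem_image.1 hp
    obtain ⟨hx0, hx1, hy0, hy1⟩ := hser.1 q hq
    exact squareSmul_mem_gridSquare _ g ⟨⟨hx0, hx1⟩, hy0, hy1⟩
  rw [strings8_eq_map, exists_uniqueMaxAt_map_iff (by decide) (by decide)]
  refine (exists_forall_ne_lt_iff_stabilizer_eq_bot hinj).trans ?_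
  simp only [Subgroup.eq_bot_iff_forall, MulAction.mem_stabilizer_iff]
  change (∀ g : DihedralGroup 4, C.image (squareSmul ((n : ℤ) - 1) g) = C → g = 1) ↔ _
  simp only [← not_imp_not (a := _ = (1 : DihedralGroup 4)),
    dihedralGroup_four_forall_ne_one_iff, squareSmul_r_one, squareSmul_r_two, squareSmul_r_three,
    squareSmul_sr_zero, squareSmul_sr_one, squareSmul_sr_two, squareSmul_sr_three]

/-- Let `C` be a configuration whose smallest enclosing
rectangle `R` is the square with corners `A = (0,0)`, `B = (n-1,0)`,
`C = (n-1,n-1)`, `D = (0,n-1)` after translation, `n ≥ 2`.  Then the following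
are equivalent: (1) among the eight associated strings `λ_AB`, `λ_BA`, `λ_CD`,
`λ_DC`, `λ_BC`, `λ_CB`, `λ_AD`, `λ_DA` there is a unique lexicographically
largest one (`C` is asymmetric); (2) no nontrivial element of the dihedral
group of order 8 of symmetries of the square `R` (the rotations by `90°`,
`180°`, `270°` about its centre and the four reflections across its horizontal,
vertical and two diagonal bisectors) maps `C` onto `C`. -/
theorem square_asymmetric_iff_no_nontrivial_dihedral_symmetry
    (C : Finset (ℤ × ℤ)) (n : ℕ) (hn : 2 ≤ n)
    (hser : isSER C n n) :
    (∃ i, uniqueMaxAt (strings8 C n n) i) ↔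
      (C.image (fun p => ((n : ℤ) - 1 - p.2, p.1)) ≠ C ∧          -- rotation 90°
       C.image (fun p => ((n : ℤ) - 1 - p.1, (n : ℤ) - 1 - p.2)) ≠ C ∧  -- rotation 180°
       C.image (fun p => (p.2, (n : ℤ) - 1 - p.1)) ≠ C ∧          -- rotation 270°
       C.image (fun p => (p.1, (n : ℤ) - 1 - p.2)) ≠ C ∧          -- horizontal bisector
       C.image (fun p => ((n : ℤ) - 1 - p.1, p.2)) ≠ C ∧          -- vertical bisector
       C.image (fun p => (p.2, p.1)) ≠ C ∧                        -- diagonal y = x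
       C.image (fun p => ((n : ℤ) - 1 - p.2, (n : ℤ) - 1 - p.1)) ≠ C) :=
  square_asymmetric_iff_no_nontrivial_dihedral_symmetry_general C n hser
end
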